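/- Let G = ⟨V,E,T⟩ be an OMVPP k-grabbing pawn game and let c be an initial configuration from which Player 1 wins. Then Player 1 has a winning strategy such that, against every Player 2 strategy, a target vertex in T is reached within |V|·(k+1) rounds. -/
import Mathlib


open scoped Classical

/-- A strategy maps the history of previously visited positions and the current
position to a next position. -/
abbrev Strat (Pos : Type*) := List Pos → Pos → Pos

/-- A two-player turn-based game with positions `Pos`: `move` is the edge relation
(every position has a successor), `turn1 p` holds when Player 1 is the one to move at `p`,
and `target` is Player 1's reachability objective. -/
structure TB (Pos : Type*) where
  move : Pos → Pos → Prop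
  total : ∀ p, ∃ q, move p q
  turn1 : Pos → Prop
  target : Pos → Prop

namespace TB

variable {Pos : Type*} (g : TB Pos)

/-- A strategy is legal if it always moves along edges of the game. -/
def Legal (f : Strat Pos) : Prop := ∀ h p, g.move p (f h p)

/-- The history (first component) and current position (second component) of the play
after `n` steps, when the game starts at `p0` and the players use `f1` and `f2`. -/
noncomputable def histPlay (f1 f2 : Strat Pos) (p0 : Pos) : ℕ → List Pos × Pos
  | 0 => ([], p0)
  | n + 1 =>
      let hp : List Pos × Pos := histPlay f1 f2 p0 n
      (hp.1 ++ [hp.2], if g.turn1 hp.2 then f1 hp.1 hp.2 else f2 hp.1 hp.2)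

/-- The position of the play after `n` steps. -/
noncomputable def play (f1 f2 : Strat Pos) (p0 : Pos) (n : ℕ) : Pos :=
  (g.histPlay f1 f2 p0 n).2

/-- Player 1 has a winning strategy from `p0`: some legal strategy such that against every
legal Player 2 strategy the play visits the target. -/
def Win1 (p0 : Pos) : Prop :=
  ∃ f1, g.Legal f1 ∧ ∀ f2, g.Legal f2 → ∃ n, g.target (g.play f1 f2 p0 n)

/-- Player 2 has a winning strategy from `p0`: some legal strategy such that against every
legal Player 1 strategy the play never visits the target. -/
def Win2 (p0 : Pos) : Prop :=
  ∃ f2, g.Legal f2 ∧ ∀ f1, g.Legal f1 → ∀ n, ¬ g.target (g.play f1 f2 p0 n)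

end TB

/-- An OMVPP pawn game: each vertex `w` may be owned by several pawns (`owns w`), and
Player 1 moves the token from `w` iff he controls at least one pawn owning `w`. -/
structure OPawnGame (V : Type*) (ι : Type*) where
  E : V → V → Prop
  total : ∀ w, ∃ u, E w u
  owns : V → Set ι
  target : V → Prop

/-- Positions of the turn-based game induced by an OMVPP pawn game under the `k`-grabbing
mechanism. -/
inductive KPos (V : Type*) (ι : Type*) where
  | conf (w : V) (P : Set ι) (r : ℕ)
  | mid (u : V) (P : Set ι) (r : ℕ)

/-- Moves of the `k`-grabbing mechanism: after each move of the token Player 1 may grab one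
of Player 2's pawns, provided grabs remain; grabbed pawns stay with Player 1 forever. -/
inductive OKGMove {V ι : Type*} (G : OPawnGame V ι) : KPos V ι → KPos V ι → Prop
  | step {w u : V} {P : Set ι} {r : ℕ} :
      G.E w u → OKGMove G (.conf w P r) (.mid u P r)
  | noGrab {u : V} {P : Set ι} {r : ℕ} : OKGMove G (.mid u P r) (.conf u P r)
  | grab {u : V} {P : Set ι} {r : ℕ} {j : ι} :
      j ∉ P → OKGMove G (.mid u P (r + 1)) (.conf u (insert j P) r)

/-- The turn-based game induced by an OMVPP `k`-grabbing pawn game: Player 1 moves at a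
configuration iff he controls at least one pawn owning the current vertex, and the
intermediate (grabbing) positions belong to Player 1. -/
def OPawnGame.KG {V ι : Type*} (G : OPawnGame V ι) : TB (KPos V ι) where
  move := OKGMove G
  total := by
    rintro (⟨w, P, r⟩ | ⟨u, P, r⟩)
    · obtain ⟨u, hu⟩ := G.total w
      exact ⟨.mid u P r, .step hu⟩
    · exact ⟨.conf u P r, .noGrab⟩
  turn1 := fun p =>
    match p with
    | .conf w P _ => (G.owns w ∩ P).Nonempty
    | .mid _ _ _ => True
  target := fun p =>
    match p with
    | .conf w _ _ => G.target w
    | .mid _ _ _ => False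


namespace OPawnGame

variable {V : Type*} {ι : Type*}

/-- Player 1 can win within `n` rounds from configuration `⟨w,P,r⟩`. -/
def WinIn (G : OPawnGame V ι) : ℕ → V → Set ι → ℕ → Prop
  | 0, w, _, _ => G.target w
  | n + 1, w, P, r => G.target w ∨
      ((G.owns w ∩ P).Nonempty ∧ ∃ u, G.E w u ∧
        (G.WinIn n u P r ∨ ∃ r' j, r = r' + 1 ∧ j ∉ P ∧ G.WinIn n u (insert j P) r')) ∨
      (¬ (G.owns w ∩ P).Nonempty ∧ ∀ u, G.E w u →
        (G.WinIn n u P r ∨ ∃ r' j, r = r' + 1 ∧ j ∉ P ∧ G.WinIn n u (insert j P) r'))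

/-- Player 1 can win within `n` rounds from the mid position after the token moved to `u`. -/
def After (G : OPawnGame V ι) (n : ℕ) (u : V) (P : Set ι) (r : ℕ) : Prop :=
  G.WinIn n u P r ∨ ∃ r' j, r = r' + 1 ∧ j ∉ P ∧ G.WinIn n u (insert j P) r'

lemma winIn_succ_iff (G : OPawnGame V ι) (n : ℕ) (w : V) (P : Set ι) (r : ℕ) :
    G.WinIn (n + 1) w P r ↔ G.target w ∨
      ((G.owns w ∩ P).Nonempty ∧ ∃ u, G.E w u ∧ G.After n u P r) ∨
      (¬ (G.owns w ∩ P).Nonempty ∧ ∀ u, G.E w u → G.After n u P r) := Iff.rfl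

lemma winIn_zero_iff (G : OPawnGame V ι) (w : V) (P : Set ι) (r : ℕ) :
    G.WinIn 0 w P r ↔ G.target w := Iff.rfl

lemma target_winIn (G : OPawnGame V ι) {n w P r} (h : G.target w) : G.WinIn n w P r := by
  cases n with
  | zero => exact h
  | succ n => exact Or.inl h

lemma winIn_succ (G : OPawnGame V ι) : ∀ (n : ℕ) {w P r},
    G.WinIn n w P r → G.WinIn (n + 1) w P r := by
  intro n
  induction n with
  | zero => intro w P r h; exact Or.inl h
  | succ n ih =>
    intro w P r h
    have hA : ∀ u (P : Set ι) r, G.After n u P r → G.After (n + 1) u P r := by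
      rintro u P r (h | ⟨r', j, h1, h2, h3⟩)
      · exact Or.inl (ih h)
      · exact Or.inr ⟨r', j, h1, h2, ih h3⟩
    rw [winIn_succ_iff] at h ⊢
    rcases h with h | ⟨ht, u, hE, ha⟩ | ⟨ht, hall⟩
    · exact Or.inl h
    · exact Or.inr (Or.inl ⟨ht, u, hE, hA _ _ _ ha⟩)
    · exact Or.inr (Or.inr ⟨ht, fun u hu => hA _ _ _ (hall u hu)⟩)

lemma winIn_le (G : OPawnGame V ι) {n m : ℕ} {w P r} (hnm : n ≤ m)
    (h : G.WinIn n w P r) : G.WinIn m w P r := by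
  induction hnm with
  | refl => exact h
  | step _ ih => exact G.winIn_succ _ ih

lemma after_le (G : OPawnGame V ι) {n m : ℕ} {u P r} (hnm : n ≤ m)
    (h : G.After n u P r) : G.After m u P r := by
  rcases h with h | ⟨r', j, h1, h2, h3⟩
  · exact Or.inl (G.winIn_le hnm h)
  · exact Or.inr ⟨r', j, h1, h2, G.winIn_le hnm h3⟩

end OPawnGame

namespace OPawnGame

variable {V : Type*} {ι : Type*} [Fintype V]

lemma winIn_core (G : OPawnGame V ι) (P : Set ι) (r B : ℕ)
    (hGr : ∀ u r' j (n : ℕ), r = r' + 1 → j ∉ P → G.WinIn n u (insert j P) r' →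
      G.WinIn B u (insert j P) r') :
    ∀ (n : ℕ) (w : V), G.WinIn n w P r → G.WinIn (B + Fintype.card V) w P r := by
  set S : ℕ → Set V := fun m => {w | G.WinIn (B + m) w P r} with hS
  set Gr : V → Prop := fun u => ∃ r' j, r = r' + 1 ∧ j ∉ P ∧ G.WinIn B u (insert j P) r'
    with hGrdef
  have hAfter : ∀ (m : ℕ) (u : V), G.After (B + m) u P r ↔ (u ∈ S m ∨ Gr u) := by
    intro m u
    constructor
    · rintro (h | ⟨r', j, h1, h2, h3⟩)
      · exact Or.inl h
      · exact Or.inr ⟨r', j, h1, h2, hGr u r' j _ h1 h2 h3⟩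
    · rintro (h | ⟨r', j, h1, h2, h3⟩)
      · exact Or.inl h
      · exact Or.inr ⟨r', j, h1, h2, G.winIn_le (Nat.le_add_right B m) h3⟩
  have hstep : ∀ (m : ℕ) (w : V), w ∈ S (m + 1) ↔
      (G.target w ∨
        ((G.owns w ∩ P).Nonempty ∧ ∃ u, G.E w u ∧ (u ∈ S m ∨ Gr u)) ∨
        (¬ (G.owns w ∩ P).Nonempty ∧ ∀ u, G.E w u → (u ∈ S m ∨ Gr u))) := by
    intro m w
    show G.WinIn (B + m + 1) w P r ↔ _
    rw [winIn_succ_iff]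
    simp only [hAfter]
  have hSmono : ∀ m, S m ⊆ S (m + 1) := by
    intro m w h
    exact G.winIn_succ (B + m) h
  have hstab : ∃ i ≤ Fintype.card V, S i = S (i + 1) := by
    by_contra hcon
    push_neg at hcon
    have hlt : ∀ i, i ≤ Fintype.card V + 1 → i ≤ (S i).ncard := by
      intro i
      induction i with
      | zero => intro _; exact Nat.zero_le _
      | succ i ih =>
        intro hi
        have h1 : S i ⊂ S (i + 1) := (hSmono i).ssubset_of_ne (hcon i (by omega))
        have h2 := Set.ncard_lt_ncard h1 (Set.toFinite _)
        have h3 := ih (by omega)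
        omega
    have h2 := hlt (Fintype.card V + 1) le_rfl
    have h3 : (S (Fintype.card V + 1)).ncard ≤ Fintype.card V := by
      have := Set.ncard_le_ncard (Set.subset_univ (S (Fintype.card V + 1))) Set.finite_univ
      simpa [Set.ncard_univ, Nat.card_eq_fintype_card] using this
    omega
  obtain ⟨i, hi, heq⟩ := hstab
  have hfix : ∀ t, S (i + t) = S i := by
    intro t
    induction t with
    | zero => rfl
    | succ t ih =>
      ext w
      have h1 := hstep (i + t) w
      rw [ih] at h1
      have h2 := hstep i w
      show w ∈ S ((i + t) + 1) ↔ w ∈ S i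
      rw [h1, ← h2, ← heq]
  intro n w h
  have h' : w ∈ S (Fintype.card V + n) := G.winIn_le (by omega) h
  have e1 : S (Fintype.card V + n) = S i := by
    rw [show Fintype.card V + n = i + (Fintype.card V - i + n) by omega, hfix]
  have e2 : S (Fintype.card V) = S i := by
    rw [show Fintype.card V = i + (Fintype.card V - i) by omega, hfix]
  rw [e1, ← e2] at h'
  exact h'

lemma winIn_collapse (G : OPawnGame V ι) : ∀ (r : ℕ) (P : Set ι) (n : ℕ) (w : V),
    G.WinIn n w P r → G.WinIn (Fintype.card V * (r + 1)) w P r := by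
  intro r
  induction r with
  | zero =>
    intro P n w h
    have := G.winIn_core P 0 0 (by intro u r' j n h1; omega) n w h
    simpa using this
  | succ r ih =>
    intro P n w h
    have := G.winIn_core P (r + 1) (Fintype.card V * (r + 1))
      (by
        intro u r' j n h1 h2 h3
        obtain rfl : r' = r := by omega
        exact ih _ _ _ h3) n w h
    have heq : Fintype.card V * (r + 1) + Fintype.card V = Fintype.card V * (r + 1 + 1) := by
      ring
    rwa [heq] at this

end OPawnGame

lemma TB.play_zero {Pos : Type*} (g : TB Pos) (f1 f2 : Strat Pos) (p0 : Pos) :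
    g.play f1 f2 p0 0 = p0 := rfl

lemma TB.play_succ {Pos : Type*} (g : TB Pos) (f1 f2 : Strat Pos) (p0 : Pos) (n : ℕ) :
    g.play f1 f2 p0 (n + 1) =
      (if g.turn1 (g.play f1 f2 p0 n) then f1 (g.histPlay f1 f2 p0 n).1 (g.play f1 f2 p0 n)
       else f2 (g.histPlay f1 f2 p0 n).1 (g.play f1 f2 p0 n)) := rfl

namespace OPawnGame

variable {V : Type*} {ι : Type*}

/-- Safety for Player 2: the current position admits no bounded Player-1 win. -/
lemma KG_turn1_conf (G : OPawnGame V ι) (w : V) (P : Set ι) (r : ℕ) :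
    G.KG.turn1 (KPos.conf w P r) = (G.owns w ∩ P).Nonempty := rfl

lemma KG_turn1_mid (G : OPawnGame V ι) (u : V) (P : Set ι) (r : ℕ) :
    G.KG.turn1 (KPos.mid u P r) = True := rfl

/-- Safety for Player 2: the current position admits no bounded Player-1 win. -/
def Safe (G : OPawnGame V ι) : KPos V ι → Prop
  | .conf w P r => ∀ n, ¬ G.WinIn n w P r
  | .mid u P r => ∀ n, ¬ G.After n u P r

lemma exists_bad_succ [Fintype V] (G : OPawnGame V ι) {w : V} {P : Set ι} {r : ℕ}
    (hsafe : ∀ n, ¬ G.WinIn n w P r) (ht : ¬ (G.owns w ∩ P).Nonempty) :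
    ∃ u, G.E w u ∧ ∀ n, ¬ G.After n u P r := by
  have hex : ∀ n : ℕ, ∃ u, G.E w u ∧ ¬ G.After n u P r := by
    intro n
    have h := hsafe (n + 1)
    rw [winIn_succ_iff] at h
    have hC : ¬ (∀ u, G.E w u → G.After n u P r) := by
      intro hall
      exact h (Or.inr (Or.inr ⟨ht, hall⟩))
    push_neg at hC
    exact hC
  choose g hg1 hg2 using hex
  obtain ⟨u, hu⟩ := Finite.exists_infinite_fiber g
  have hu' : (g ⁻¹' {u}).Infinite := Set.infinite_coe_iff.mp hu
  obtain ⟨m0, hm0⟩ := hu'.nonempty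
  have hgm0 : g m0 = u := hm0
  refine ⟨u, hgm0 ▸ hg1 m0, ?_⟩
  intro n hA
  have hbig : ∃ m, m ∈ g ⁻¹' {u} ∧ n ≤ m := by
    by_contra hc
    push_neg at hc
    exact hu' (Set.Finite.subset (Set.finite_Iio n) (fun m hm => hc m hm))
  obtain ⟨m, hm, hnm⟩ := hbig
  have hgm : g m = u := hm
  exact hg2 m (hgm ▸ G.after_le hnm hA)

/-- The spoiling strategy for Player 2. -/
noncomputable def spoiler [Fintype V] (G : OPawnGame V ι) : Strat (KPos V ι) := fun _ p =>
  match p with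
  | .conf w P r =>
      if h : ∃ u, G.E w u ∧ ∀ n, ¬ G.After n u P r then .mid (Classical.choose h) P r
      else .mid (Classical.choose (G.total w)) P r
  | .mid u P r => .conf u P r

lemma spoiler_legal [Fintype V] (G : OPawnGame V ι) : G.KG.Legal (G.spoiler) := by
  rintro hs (⟨w, P, r⟩ | ⟨u, P, r⟩)
  · show OKGMove G _ _
    by_cases h : ∃ u, G.E w u ∧ ∀ n, ¬ G.After n u P r
    · rw [show G.spoiler hs (.conf w P r) = .mid (Classical.choose h) P r from dif_pos h]
      exact .step (Classical.choose_spec h).1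
    · rw [show G.spoiler hs (.conf w P r) = .mid (Classical.choose (G.total w)) P r
        from dif_neg h]
      exact .step (Classical.choose_spec (G.total w))
  · exact OKGMove.noGrab

lemma win1_to_winIn [Fintype V] (G : OPawnGame V ι) {v : V} {P : Set ι} {k : ℕ}
    (h : G.KG.Win1 (.conf v P k)) : ∃ n, G.WinIn n v P k := by
  by_contra hno
  push_neg at hno
  obtain ⟨f1, hf1, hplay⟩ := h
  have key : ∀ m, G.Safe (G.KG.play f1 G.spoiler (.conf v P k) m) := by
    intro m
    induction m with
    | zero => exact hno
    | succ m ih =>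
      rw [TB.play_succ]
      generalize hp : G.KG.play f1 G.spoiler (.conf v P k) m = p at ih
      match p with
      | KPos.conf w Q r =>
        by_cases ht : (G.owns w ∩ Q).Nonempty
        · rw [KG_turn1_conf, if_pos ht]
          have hm : OKGMove G (.conf w Q r)
              (f1 (G.KG.histPlay f1 G.spoiler (.conf v P k) m).1 (.conf w Q r)) :=
            hf1 _ _
          generalize hq : f1 (G.KG.histPlay f1 G.spoiler (.conf v P k) m).1
              (.conf w Q r) = q at hm ⊢
          cases hm with
          | step hE =>
            intro n hA
            exact ih (n + 1) (Or.inr (Or.inl ⟨ht, _, hE, hA⟩))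
        · rw [KG_turn1_conf, if_neg ht]
          show G.Safe (G.spoiler _ (.conf w Q r))
          have hbad := G.exists_bad_succ ih ht
          rw [show G.spoiler (G.KG.histPlay f1 G.spoiler (.conf v P k) m).1 (.conf w Q r)
              = .mid (Classical.choose hbad) Q r from dif_pos hbad]
          exact (Classical.choose_spec hbad).2
      | KPos.mid u Q r =>
        rw [KG_turn1_mid, if_pos trivial]
        have hm : OKGMove G (.mid u Q r)
            (f1 (G.KG.histPlay f1 G.spoiler (.conf v P k) m).1 (.mid u Q r)) :=
          hf1 _ _
        generalize hq : f1 (G.KG.histPlay f1 G.spoiler (.conf v P k) m).1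
            (.mid u Q r) = q at hm ⊢
        cases hm with
        | noGrab =>
          intro n hW
          exact ih n (Or.inl hW)
        | @grab _ _ r0 j hj =>
          intro n hW
          exact ih n (Or.inr ⟨r0, j, rfl, hj, hW⟩)
  obtain ⟨n, hn⟩ := hplay G.spoiler G.spoiler_legal
  have hs := key n
  generalize hp : G.KG.play f1 G.spoiler (.conf v P k) n = p at hn hs
  match p with
  | KPos.conf w Q r => exact hs 0 hn
  | KPos.mid u Q r => exact hn

end OPawnGame

namespace OPawnGame

variable {V : Type*} {ι : Type*}

/-- Player 1's choice at a mid position: grab if it is strictly better. -/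
noncomputable def midMove (G : OPawnGame V ι) (u : V) (P : Set ι) : ℕ → KPos V ι
  | 0 => .conf u P 0
  | r' + 1 =>
    if h : (∃ j, j ∉ P ∧ G.WinIn (sInf {n | G.After n u P (r' + 1)}) u (insert j P) r') ∧
        ¬ G.WinIn (sInf {n | G.After n u P (r' + 1)}) u P (r' + 1)
    then .conf u (insert h.1.choose P) r'
    else .conf u P (r' + 1)

lemma midMove_legal (G : OPawnGame V ι) (u : V) (P : Set ι) (r : ℕ) :
    OKGMove G (.mid u P r) (G.midMove u P r) := by
  cases r with
  | zero => exact .noGrab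
  | succ r' =>
    show OKGMove G _ (dite _ _ _)
    split
    case isTrue h => exact .grab h.1.choose_spec.1
    case isFalse _ => exact .noGrab

lemma midMove_spec (G : OPawnGame V ι) {a : ℕ} {u : V} {P : Set ι} {r : ℕ}
    (ha : G.After a u P r) :
    ∃ P' r', G.midMove u P r = .conf u P' r' ∧ G.WinIn a u P' r' := by
  cases r with
  | zero =>
    refine ⟨P, 0, rfl, ?_⟩
    rcases ha with h | ⟨r', j, he, -, -⟩
    · exact h
    · omega
  | succ r'' =>
    have hane : {n | G.After n u P (r'' + 1)}.Nonempty := ⟨a, ha⟩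
    have hmem : G.After (sInf {n | G.After n u P (r'' + 1)}) u P (r'' + 1) :=
      Nat.sInf_mem hane
    have hsa : sInf {n | G.After n u P (r'' + 1)} ≤ a := Nat.sInf_le ha
    by_cases hW : G.WinIn (sInf {n | G.After n u P (r'' + 1)}) u P (r'' + 1)
    · refine ⟨P, r'' + 1, ?_, G.winIn_le hsa hW⟩
      show dite _ _ _ = _
      rw [dif_neg]
      rintro ⟨-, h2⟩
      exact h2 hW
    · have hgr : ∃ j, j ∉ P ∧
          G.WinIn (sInf {n | G.After n u P (r'' + 1)}) u (insert j P) r'' := by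
        rcases hmem with h | ⟨r', j, he, hj, hw⟩
        · exact absurd h hW
        · obtain rfl : r' = r'' := by omega
          exact ⟨j, hj, hw⟩
      have hcond : (∃ j, j ∉ P ∧
          G.WinIn (sInf {n | G.After n u P (r'' + 1)}) u (insert j P) r'') ∧
          ¬ G.WinIn (sInf {n | G.After n u P (r'' + 1)}) u P (r'' + 1) := ⟨hgr, hW⟩
      refine ⟨insert hcond.1.choose P, r'', ?_, ?_⟩
      · show dite _ _ _ = _
        rw [dif_pos hcond]
      · exact G.winIn_le hsa hcond.1.choose_spec.2

/-- Player 1's choice at a configuration: move towards a fastest win. -/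
noncomputable def confMove (G : OPawnGame V ι) (w : V) (P : Set ι) (r : ℕ) : KPos V ι :=
  if h : ∃ u, G.E w u ∧ G.After (sInf {n | G.WinIn n w P r} - 1) u P r
  then .mid h.choose P r
  else .mid (Classical.choose (G.total w)) P r

lemma confMove_legal (G : OPawnGame V ι) (w : V) (P : Set ι) (r : ℕ) :
    OKGMove G (.conf w P r) (G.confMove w P r) := by
  unfold confMove
  split
  case isTrue h => exact .step h.choose_spec.1
  case isFalse _ => exact .step (Classical.choose_spec (G.total w))

lemma confMove_spec (G : OPawnGame V ι) {n : ℕ} {w : V} {P : Set ι} {r : ℕ}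
    (hW : G.WinIn n w P r) (hnt : ¬ G.target w) (ht : (G.owns w ∩ P).Nonempty) :
    ∃ u a, G.confMove w P r = .mid u P r ∧ a + 1 ≤ n ∧ G.After a u P r := by
  have hwne : {n | G.WinIn n w P r}.Nonempty := ⟨n, hW⟩
  have hmem : G.WinIn (sInf {n | G.WinIn n w P r}) w P r := Nat.sInf_mem hwne
  have hle : sInf {n | G.WinIn n w P r} ≤ n := Nat.sInf_le hW
  have hpos : sInf {n | G.WinIn n w P r} ≠ 0 := by
    intro h0
    rw [h0] at hmem
    exact hnt hmem
  obtain ⟨t, htt⟩ := Nat.exists_eq_succ_of_ne_zero hpos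
  rw [htt, winIn_succ_iff] at hmem
  rcases hmem with h | ⟨-, u, hE, hA⟩ | ⟨hc, -⟩
  · exact absurd h hnt
  · have hcond : ∃ u, G.E w u ∧ G.After (sInf {n | G.WinIn n w P r} - 1) u P r := by
      refine ⟨u, hE, ?_⟩
      rw [htt]
      simpa using hA
    refine ⟨hcond.choose, sInf {n | G.WinIn n w P r} - 1, ?_, by omega, hcond.choose_spec.2⟩
    unfold confMove
    rw [dif_pos hcond]
  · exact absurd ht hc

/-- Player 1's optimal strategy. -/
noncomputable def opt (G : OPawnGame V ι) : Strat (KPos V ι) := fun _ p =>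
  match p with
  | .conf w P r => G.confMove w P r
  | .mid u P r => G.midMove u P r

lemma opt_legal (G : OPawnGame V ι) : G.KG.Legal G.opt := by
  rintro hs (⟨w, P, r⟩ | ⟨u, P, r⟩)
  · exact G.confMove_legal w P r
  · exact G.midMove_legal u P r

lemma opt_sound (G : OPawnGame V ι) (f2 : Strat (KPos V ι)) (hf2 : G.KG.Legal f2)
    (n0 : ℕ) (v : V) (P : Set ι) (k : ℕ) (h0 : G.WinIn n0 v P k) :
    ∃ m ≤ n0, G.KG.target (G.KG.play G.opt f2 (.conf v P k) (2 * m)) := by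
  have key : ∀ m, (∃ m' ≤ m, G.KG.target (G.KG.play G.opt f2 (.conf v P k) (2 * m'))) ∨
      (m ≤ n0 ∧ ∃ w Q r, G.KG.play G.opt f2 (.conf v P k) (2 * m) = .conf w Q r ∧
        G.WinIn (n0 - m) w Q r) := by
    intro m
    induction m with
    | zero => exact Or.inr ⟨Nat.zero_le _, v, P, k, rfl, by simpa using h0⟩
    | succ m ih =>
      rcases ih with ⟨m', hm', ht⟩ | ⟨hmn, w, Q, r, hp, hW⟩
      · exact Or.inl ⟨m', le_trans hm' (Nat.le_succ m), ht⟩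
      · by_cases htar : G.target w
        · refine Or.inl ⟨m, Nat.le_succ m, ?_⟩
          rw [hp]
          exact htar
        · have hnm : m < n0 := by
            rcases Nat.lt_or_ge m n0 with h | h
            · exact h
            · exfalso
              have he : n0 - m = 0 := by omega
              rw [he] at hW
              exact htar hW
          have hmid : ∃ u, G.KG.play G.opt f2 (.conf v P k) (2 * m + 1) = .mid u Q r ∧
              G.After (n0 - (m + 1)) u Q r := by
            rw [TB.play_succ, hp]
            by_cases hturn : (G.owns w ∩ Q).Nonempty
            · rw [KG_turn1_conf, if_pos hturn]
              obtain ⟨u, a, hcm, han, hA⟩ := G.confMove_spec hW htar hturn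
              exact ⟨u, hcm, G.after_le (by omega) hA⟩
            · rw [KG_turn1_conf, if_neg hturn]
              have hm2 : OKGMove G (.conf w Q r)
                  (f2 (G.KG.histPlay G.opt f2 (.conf v P k) (2 * m)).1 (.conf w Q r)) :=
                hf2 _ _
              generalize hq : f2 (G.KG.histPlay G.opt f2 (.conf v P k) (2 * m)).1
                  (.conf w Q r) = q at hm2 ⊢
              cases hm2 with
              | step hE =>
                refine ⟨_, rfl, ?_⟩
                have he : n0 - m = (n0 - (m + 1)) + 1 := by omega
                rw [he, winIn_succ_iff] at hW
                rcases hW with h | ⟨hc, -⟩ | ⟨-, hall⟩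
                · exact absurd h htar
                · exact absurd hc hturn
                · exact hall _ hE
          obtain ⟨u, hpu, hA⟩ := hmid
          obtain ⟨Q', r', hmm, hW'⟩ := G.midMove_spec hA
          refine Or.inr ⟨by omega, u, Q', r', ?_, hW'⟩
          rw [show 2 * (m + 1) = (2 * m + 1) + 1 by ring, TB.play_succ, hpu,
            KG_turn1_mid, if_pos trivial]
          exact hmm
  rcases key n0 with ⟨m', hm', ht⟩ | ⟨-, w, Q, r, hp, hW⟩
  · exact ⟨m', hm', ht⟩
  · refine ⟨n0, le_rfl, ?_⟩
    rw [hp]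
    have he : n0 - n0 = 0 := by omega
    rw [he] at hW
    exact hW

end OPawnGame
/-- **Lemma 6.4 (bounded winning)**: in an OMVPP `k`-grabbing pawn game `G = ⟨V,E,T⟩`, if
Player 1 wins from the initial configuration `⟨v,P⟩` (with `k` grabs available), then he
has a winning strategy such that, against every Player 2 strategy, a target vertex is
reached within `|V| · (k+1)` rounds. (Each round of the pawn game consists of two steps of
the induced turn-based game — a token move followed by a grab decision — so the target is
reached at a position of index `2r` with `r ≤ |V| · (k+1)`.) -/
theorem omvpp_k_grabbing_bounded_win {V ι : Type*} [Fintype V]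
    (G : OPawnGame V ι) (v : V) (P : Set ι) (k : ℕ)
    (hwin : G.KG.Win1 (.conf v P k)) :
    ∃ f1, G.KG.Legal f1 ∧ ∀ f2, G.KG.Legal f2 →
      ∃ r ≤ Fintype.card V * (k + 1),
        G.KG.target (G.KG.play f1 f2 (.conf v P k) (2 * r)) := by

  obtain ⟨n, hn⟩ := G.win1_to_winIn hwin
  have hN := G.winIn_collapse k P n v hn
  exact ⟨G.opt, G.opt_legal, fun f2 hf2 => G.opt_sound f2 hf2 _ v P k hN⟩
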